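/- Suppose a, b, c, d are complex numbers that are the images of 0, ∞, 1, −1 respectively under a single fractional linear transformation f(z) = (αz+β)/(γz+δ) with αδ−βγ ≠ 0 (and all four images finite). Then (ab + cd)/2 = ((a+b)/2)·((c+d)/2), i.e., the average of the products ab and cd equals the product of the averages of {a,b} and {c,d}. -/
import Mathlib


theorem average_of_products_eq_product_of_averages
    (α β γ δ : ℂ) (hdet : α * δ - β * γ ≠ 0)
    (hδ : δ ≠ 0) (hγ : γ ≠ 0) (h1 : γ + δ ≠ 0) (h2 : -γ + δ ≠ 0)
    (a b c d : ℂ)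
    (ha : a = β / δ) (hb : b = α / γ)
    (hc : c = (α + β) / (γ + δ)) (hd : d = (-α + β) / (-γ + δ)) :
    (a * b + c * d) / 2 = ((a + b) / 2) * ((c + d) / 2) := by
  subst ha hb hc hd
  field_simp
  ring
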